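/- Let s, t be naturals with s > t ≥ 2 and n := C(s,2) + C(t,2). Let G = (L, R, E) be a bipartite graph with deg_G(a) ≤ 2 for every a ∈ R and with distinct left nodes x_1, …, x_6 ∈ L such that deg_G(x_1) = deg_G(x_2) = s, deg_G(x_3) = deg_G(x_4) = t, deg_G(x_5) = deg_G(x_6) = n + 1, deg_G(u) ≤ 1 for every u ∈ L ∖ {x_1, …, x_6}, β(G) = n + C(n,2), |N_G(x_5) ∩ N_G(x_6)| = n, |N_G(x_1) ∩ N_G(x_2)| = s, and |N_G(x_3) ∩ N_G(x_4)| = t. Suppose a p-BSO (S, σ) applicable to G transforms G into a bipartite graph G' with β(G') = n + C(n,2) and |N_{G'}(x_5) ∩ N_{G'}(x_6)| = n + 1. Then p ≥ 2(s − 1). -/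

import Mathlib

open Finset

variable {L R : Type*} [Fintype L] [DecidableEq L] [Fintype R] [DecidableEq R]

/-- The set of neighbors of a left node `u` in the bipartite graph with edge set `E`. -/
def nbrs (E : Finset (L × R)) (u : L) : Finset R :=
  (E.filter (fun e => e.1 = u)).image Prod.snd

/-- The degree of a left node. -/
def ldeg (E : Finset (L × R)) (u : L) : ℕ := (nbrs E u).card

/-- The set of neighbors of a right node `a` in the bipartite graph with edge set `E`. -/
def rnbrs (E : Finset (L × R)) (a : R) : Finset L :=
  (E.filter (fun e => e.2 = a)).image Prod.fst

/-- The degree of a right node. -/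
def rdeg (E : Finset (L × R)) (a : R) : ℕ := (rnbrs E a).card

/-- The butterflies of the bipartite graph with edge set `E`: a butterfly is a pair of
two left nodes and two right nodes all pairwise connected. -/
def butterflies (E : Finset (L × R)) : Finset (Finset L × Finset R) :=
  Finset.univ.filter
    (fun B => B.1.card = 2 ∧ B.2.card = 2 ∧ ∀ u ∈ B.1, ∀ a ∈ B.2, (u, a) ∈ E)

/-- The total number of butterflies. -/
def bfc (E : Finset (L × R)) : ℕ := (butterflies E).card

/-- The number of butterflies containing the left node `u`. -/
def bfcn (E : Finset (L × R)) (u : L) : ℕ :=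
  ((butterflies E).filter (fun B => u ∈ B.1)).card

/-- The number of butterflies containing both left nodes `u` and `v`. -/
def bfcnn (E : Finset (L × R)) (u v : L) : ℕ :=
  ((butterflies E).filter (fun B => u ∈ B.1 ∧ v ∈ B.1)).card

/-- A `q`-BSO transforming edge set `E` into edge set `E'`. -/
def IsBSOStep (q : ℕ) (E E' : Finset (L × R)) : Prop :=
  1 ≤ q ∧ ∃ (S : Fin q → L × R) (σ : Equiv.Perm (Fin q)),
    Function.Injective S ∧ (∀ j, S j ∈ E) ∧ (∀ j, σ j ≠ j) ∧
    (∀ j, ((S j).1, (S (σ j)).2) ∉ E) ∧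
    E' = (E \ Finset.image S Finset.univ) ∪
      Finset.image (fun j => ((S j).1, (S (σ j)).2)) Finset.univ

/-!
After the swap, `x5` and `x6` share `n + 1` neighbours and so already span
`C(n + 1, 2) = n + C(n, 2)` butterflies, the whole butterfly count of `G'`. Hence `x1` and `x2`
share at most one neighbour in `G'`, and at least `s - 1` of their `s` common neighbours are lost.
Each lost one is the right end of a swapped edge at `x1` or `x2`; the new edge that the derangement
attaches to `x1` (or `x2`) must avoid their common neighbourhood, so `σ` maps these swapped edges
to other swapped edges, and `p` is at least twice their number.
-/

section

variable {L R : Type*} [DecidableEq L] [DecidableEq R]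

theorem mem_nbrs {E : Finset (L × R)} {u : L} {a : R} : a ∈ nbrs E u ↔ (u, a) ∈ E := by
  simp [nbrs]

theorem IsBSOStep.two_mul_card_lost_common_nbrs_le {q : ℕ} {E E' : Finset (L × R)}
    (h : IsBSOStep q E E') (u v : L) :
    2 * #((nbrs E u ∩ nbrs E v) \ (nbrs E' u ∩ nbrs E' v)) ≤ q := by
  obtain ⟨-, S, σ, -, -, -, hnew, hE'⟩ := h
  have hremoved : E \ E' ⊆ univ.image S := by
    intro e he
    by_contra hS
    exact (mem_sdiff.1 he).2 (hE' ▸ mem_union_left _ (mem_sdiff.2 ⟨(mem_sdiff.1 he).1, hS⟩))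
  set C := nbrs E u ∩ nbrs E v
  set J : Finset (Fin q) := {j | ((S j).1 = u ∨ (S j).1 = v) ∧ (S j).2 ∈ C}
  have hlost : C \ (nbrs E' u ∩ nbrs E' v) ⊆ J.image (fun j => (S j).2) := by
    intro a ha
    obtain ⟨haC, haC'⟩ := mem_sdiff.1 ha
    have hE : (u, a) ∈ E ∧ (v, a) ∈ E := by simpa [C, mem_nbrs] using haC
    have hE' : (u, a) ∉ E' ∨ (v, a) ∉ E' := by
      by_contra! h
      exact haC' (by simpa [mem_nbrs] using h)
    obtain ⟨w, hw, hwE, hwE'⟩ : ∃ w, (w = u ∨ w = v) ∧ (w, a) ∈ E ∧ (w, a) ∉ E' := by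
      rcases hE' with h | h
      exacts [⟨u, .inl rfl, hE.1, h⟩, ⟨v, .inr rfl, hE.2, h⟩]
    obtain ⟨j, -, hj⟩ := mem_image.1 (hremoved (mem_sdiff.2 ⟨hwE, hwE'⟩))
    exact mem_image.2 ⟨j, by simp [J, hj, hw, haC], by simp [hj]⟩
  have hdisj : Disjoint J (J.map σ.toEmbedding) := by
    refine disjoint_right.2 fun j hj hjJ => ?_
    obtain ⟨k, hkJ, rfl⟩ := mem_map.1 hj
    obtain ⟨hk, -⟩ := (mem_filter.1 hkJ).2
    have hσk : (u, (S (σ k)).2) ∈ E ∧ (v, (S (σ k)).2) ∈ E := by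
      simpa [C, mem_nbrs] using (mem_filter.1 hjJ).2.2
    rcases hk with hk | hk
    exacts [hnew k (hk ▸ hσk.1), hnew k (hk ▸ hσk.2)]
  calc 2 * #(C \ _) ≤ 2 * #J := Nat.mul_le_mul_left 2 ((card_le_card hlost).trans card_image_le)
    _ = #(J ∪ J.map σ.toEmbedding) := by rw [card_union_of_disjoint hdisj, card_map]; ring
    _ ≤ q := (card_le_univ _).trans_eq (Fintype.card_fin q)

end

theorem card_butterflies_filter_fst_eq_pair (E : Finset (L × R)) {u v : L} (huv : u ≠ v) :
    #{B ∈ butterflies E | B.1 = {u, v}} = (#(nbrs E u ∩ nbrs E v)).choose 2 := by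
  have : {B ∈ butterflies E | B.1 = {u, v}} =
      (powersetCard 2 (nbrs E u ∩ nbrs E v)).image (Prod.mk {u, v}) := by
    ext ⟨P, A⟩
    simp only [butterflies, mem_filter, mem_univ, true_and, mem_image, mem_powersetCard,
      subset_iff, mem_inter, mem_nbrs, Prod.mk.injEq]
    constructor
    · rintro ⟨⟨-, hA, hE⟩, rfl⟩
      exact ⟨A, ⟨fun a ha => ⟨hE u (by simp) a ha, hE v (by simp) a ha⟩, hA⟩, rfl, rfl⟩
    · rintro ⟨A, ⟨hE, hA⟩, rfl, rfl⟩
      refine ⟨⟨card_pair huv, hA, ?_⟩, rfl⟩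
      simp only [mem_insert, mem_singleton, forall_eq_or_imp, forall_eq]
      exact ⟨fun a ha => (hE ha).1, fun a ha => (hE ha).2⟩
  rw [this, card_image_of_injective _ (Prod.mk_right_injective _), card_powersetCard]

theorem choose_two_add_choose_two_le_bfc (E : Finset (L × R)) {u v x y : L} (huv : u ≠ v)
    (hxy : x ≠ y) (hne : ({u, v} : Finset L) ≠ {x, y}) :
    (#(nbrs E u ∩ nbrs E v)).choose 2 + (#(nbrs E x ∩ nbrs E y)).choose 2 ≤ bfc E := by
  have hdisj : Disjoint {B ∈ butterflies E | B.1 = {u, v}} {B ∈ butterflies E | B.1 = {x, y}} :=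
    disjoint_filter.2 fun _ _ h₁ h₂ => hne (h₁.symm.trans h₂)
  rw [← card_butterflies_filter_fst_eq_pair E huv, ← card_butterflies_filter_fst_eq_pair E hxy,
    ← card_union_of_disjoint hdisj]
  exact card_le_card (union_subset (filter_subset _ _) (filter_subset _ _))

theorem stmt_12_general {L R : Type*} [Fintype L] [DecidableEq L] [Fintype R] [DecidableEq R]
    (s n : ℕ) (E : Finset (L × R)) (x1 x2 x3 x4 x5 x6 : L)
    (hdist : List.Pairwise (· ≠ ·) [x1, x2, x3, x4, x5, x6])
    (h12 : (nbrs E x1 ∩ nbrs E x2).card = s)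
    (p : ℕ) (E' : Finset (L × R)) (hstep : IsBSOStep p E E')
    (hbfc' : bfc E' = n + n.choose 2)
    (h56' : (nbrs E' x5 ∩ nbrs E' x6).card = n + 1) :
    2 * (s - 1) ≤ p := by
  simp only [List.pairwise_cons, List.mem_cons, List.not_mem_nil, or_false, forall_eq_or_imp,
    forall_eq, List.Pairwise.nil, and_true, false_imp_iff, implies_true] at hdist
  obtain ⟨⟨h12ne, -, -, h15, -⟩, ⟨-, -, h25, -⟩, -, -, h56ne⟩ := hdist
  have hpairs : ({x5, x6} : Finset L) ≠ {x1, x2} := fun h => by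
    have hx5 : x5 ∈ ({x1, x2} : Finset L) := h ▸ mem_insert_self x5 {x6}
    simp [h15.symm, h25.symm] at hx5
  have hcommon' : #(nbrs E' x1 ∩ nbrs E' x2) ≤ 1 := by
    have hsucc : (n + 1).choose 2 = n + n.choose 2 := by
      rw [Nat.choose_succ_succ', Nat.choose_one_right]
    have hbound := choose_two_add_choose_two_le_bfc E' h56ne h12ne hpairs
    rw [h56', hbfc', hsucc] at hbound
    have := Nat.choose_eq_zero_iff.1 (show (#(nbrs E' x1 ∩ nbrs E' x2)).choose 2 = 0 by omega)
    omega
  have hlost : s ≤ #((nbrs E x1 ∩ nbrs E x2) \ (nbrs E' x1 ∩ nbrs E' x2)) + 1 :=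
    h12 ▸ (card_le_card_sdiff_add_card (t := nbrs E' x1 ∩ nbrs E' x2)).trans (by omega)
  have := hstep.two_mul_card_lost_common_nbrs_le x1 x2
  omega

/-- Any `p`-BSO that, applied to a graph `G` as in the construction (with `x5, x6` sharing
`n` neighbors, `x1, x2` sharing all `s` neighbors, and `x3, x4` sharing all `t` neighbors),
preserves the number of butterflies `n + C(n,2)` and makes `x5` and `x6` share `n + 1`
neighbors, must swap at least `2(s - 1)` edges. -/
theorem stmt_12 {L R : Type*} [Fintype L] [DecidableEq L] [Fintype R] [DecidableEq R]
    (s t n : ℕ) (hts : t < s) (ht : 2 ≤ t) (hn : n = s.choose 2 + t.choose 2)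
    (E : Finset (L × R)) (hR : ∀ a : R, rdeg E a ≤ 2)
    (x1 x2 x3 x4 x5 x6 : L)
    (hdist : List.Pairwise (· ≠ ·) [x1, x2, x3, x4, x5, x6])
    (h1 : ldeg E x1 = s) (h2 : ldeg E x2 = s) (h3 : ldeg E x3 = t) (h4 : ldeg E x4 = t)
    (h5 : ldeg E x5 = n + 1) (h6 : ldeg E x6 = n + 1)
    (hrest : ∀ u : L, u ∉ ({x1, x2, x3, x4, x5, x6} : Finset L) → ldeg E u ≤ 1)
    (hbfc : bfc E = n + n.choose 2)
    (h56 : (nbrs E x5 ∩ nbrs E x6).card = n)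
    (h12 : (nbrs E x1 ∩ nbrs E x2).card = s)
    (h34 : (nbrs E x3 ∩ nbrs E x4).card = t)
    (p : ℕ) (E' : Finset (L × R)) (hstep : IsBSOStep p E E')
    (hbfc' : bfc E' = n + n.choose 2)
    (h56' : (nbrs E' x5 ∩ nbrs E' x6).card = n + 1) :
    2 * (s - 1) ≤ p :=
  stmt_12_general s n E x1 x2 x3 x4 x5 x6 hdist h12 p E' hstep hbfc' h56'
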